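/- arXiv:2411.11186 — 8 statements merged into one kernel-verified Lean document; each statement's English description precedes it below -/
import Mathlib

section
/- Under a competence-based trust model, for each k ∈ {0,1}, the receiver's posterior on ω^R_k after observing (y^S_k, M) is strictly smaller than after observing y^S_k alone, and the posterior after (y^S_k, A) is strictly larger than after y^S_k alone. -/
/-- Mediant lemma: if `a' * b < a * b'` with all positive, then the mediant
`(a+b)/((a+a')+(b+b'))` lies strictly between `b/(b+b')` and `a/(a+a')`. -/
lemma mediant_aux (a a' b b' : ℝ) (ha : 0 < a) (ha' : 0 < a') (hb : 0 < b)
    (hb' : 0 < b') (key : a' * b < a * b') :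
    b / (b + b') < (a + b) / (a + a' + (b + b')) ∧
      (a + b) / (a + a' + (b + b')) < a / (a + a') := by
  constructor <;> rw [div_lt_div_iff₀ (by linarith) (by linarith)] <;> nlinarith

/-- Competence-based trust model. The joint distribution of
`(y^S, θ^S, ω^R)` is a full-support pmf `q y θ ω` (under common interest,
`ω^S = ω^R` almost surely, so `P(y | ω^S, θ) = q y θ ω / P(θ, ω)`), with
`θ = true` the aligned type `A` and `θ = false` the misaligned type `M`;
`θ^S` is independent of `ω^R` (`hindep`). The aligned source is strictly
more informed: its likelihood ratio for every opinion `y_k` strictly exceeds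
the misaligned source's, which is at least 1 (`hcomp`, `hinf`). Then, for
each `k`, the posterior `P(ω^R_k | y^S_k, M)` is strictly below
`P(ω^R_k | y^S_k)`, which is strictly below `P(ω^R_k | y^S_k, A)`. -/
theorem competence_trust_spillovers
    (q : Fin 2 → Bool → Fin 2 → ℝ)
    (hpos : ∀ y θ ω, 0 < q y θ ω)
    (hsum : ∑ y : Fin 2, ∑ θ : Bool, ∑ ω : Fin 2, q y θ ω = 1)
    (hindep : ∀ θ ω, (∑ y : Fin 2, q y θ ω) =
      (∑ y : Fin 2, ∑ ω' : Fin 2, q y θ ω') *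
      (∑ y : Fin 2, ∑ θ' : Bool, q y θ' ω))
    (hcomp : ∀ k : Fin 2,
      (q k true k / ∑ y : Fin 2, q y true k) /
        (q k true (1 - k) / ∑ y : Fin 2, q y true (1 - k)) >
      (q k false k / ∑ y : Fin 2, q y false k) /
        (q k false (1 - k) / ∑ y : Fin 2, q y false (1 - k)))
    (hinf : ∀ k : Fin 2,
      (q k false k / ∑ y : Fin 2, q y false k) /
        (q k false (1 - k) / ∑ y : Fin 2, q y false (1 - k)) ≥ 1) :
    ∀ k : Fin 2,
      q k false k / (∑ ω : Fin 2, q k false ω) <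
        (∑ θ : Bool, q k θ k) / (∑ θ : Bool, ∑ ω : Fin 2, q k θ ω) ∧
      (∑ θ : Bool, q k θ k) / (∑ θ : Bool, ∑ ω : Fin 2, q k θ ω) <
        q k true k / (∑ ω : Fin 2, q k true ω) := by
  intro k
  have hne : (Finset.univ : Finset (Fin 2)).Nonempty := Finset.univ_nonempty
  have hT : 0 < ∑ y : Fin 2, ∑ ω' : Fin 2, q y true ω' :=
    Finset.sum_pos (fun i _ => Finset.sum_pos (fun j _ => hpos i true j) hne) hne
  have hF : 0 < ∑ y : Fin 2, ∑ ω' : Fin 2, q y false ω' :=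
    Finset.sum_pos (fun i _ => Finset.sum_pos (fun j _ => hpos i false j) hne) hne
  have hW : ∀ ω : Fin 2, 0 < ∑ y : Fin 2, ∑ θ' : Bool, q y θ' ω := fun ω =>
    Finset.sum_pos (fun i _ => Finset.sum_pos (fun j _ => hpos i j ω) Finset.univ_nonempty) hne
  have h1 := hcomp k
  rw [hindep true k, hindep true (1 - k), hindep false k, hindep false (1 - k)] at h1
  set T := ∑ y : Fin 2, ∑ ω' : Fin 2, q y true ω' with hTdef
  set F := ∑ y : Fin 2, ∑ ω' : Fin 2, q y false ω' with hFdef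
  set W1 := ∑ y : Fin 2, ∑ θ' : Bool, q y θ' k with hW1def
  set W2 := ∑ y : Fin 2, ∑ θ' : Bool, q y θ' (1 - k) with hW2def
  have hW1 : 0 < W1 := hW k
  have hW2 : 0 < W2 := hW (1 - k)
  have ha := hpos k true k
  have ha' := hpos k true (1 - k)
  have hb := hpos k false k
  have hb' := hpos k false (1 - k)
  have key : q k true (1 - k) * q k false k < q k true k * q k false (1 - k) := by
    rw [gt_iff_lt, div_lt_div_iff₀ (by positivity) (by positivity)] at h1
    have h2 : q k false k / (F * W1) * (q k true (1 - k) / (T * W2)) =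
        (q k false k * q k true (1 - k)) / (F * W1 * (T * W2)) := by ring
    have h3 : q k true k / (T * W1) * (q k false (1 - k) / (F * W2)) =
        (q k true k * q k false (1 - k)) / (F * W1 * (T * W2)) := by
      field_simp
    rw [h2, h3, div_lt_div_iff₀ (by positivity) (by positivity)] at h1
    nlinarith [mul_pos (mul_pos (mul_pos hF hW1) hT) hW2]
  have hsum2 : ∀ f : Fin 2 → ℝ, ∑ ω : Fin 2, f ω = f k + f (1 - k) := by
    intro f; fin_cases k <;> simp [Fin.sum_univ_two] <;> ring
  simp only [Fintype.sum_bool]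
  rw [hsum2 (q k false), hsum2 (q k true)]
  exact mediant_aux (q k true k) (q k true (1 - k)) (q k false k)
    (q k false (1 - k)) ha ha' hb hb' (by nlinarith)
end

section
/- Under a competence-based trust model, backlash cannot occur: for every k ∈ {0,1} and every sender type θ ∈ {A, M}, the posterior P(ω^R_k | y^S_k, θ) is at least the prior P(ω^R_k). -/
/-- Competence-based trust model (same encoding as Statement 1:
joint full-support pmf `q y θ ω` of `(y^S, θ^S, ω^R)` with `ω^S = ω^R`
almost surely, `θ^S` independent of `ω^R`). If every source's informativeness
ratio satisfies `I(y_k, θ) = P(y_k|ω^S_k,θ)/P(y_k|ω^S_{-k},θ) ≥ 1`, then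
backlash cannot occur: for every `k` and every type `θ`,
`P(ω^R_k | y^S_k, θ) ≥ P(ω^R_k)`. -/
theorem competence_trust_no_backlash
    (q : Fin 2 → Bool → Fin 2 → ℝ)
    (hpos : ∀ y θ ω, 0 < q y θ ω)
    (hsum : ∑ y : Fin 2, ∑ θ : Bool, ∑ ω : Fin 2, q y θ ω = 1)
    (hindep : ∀ θ ω, (∑ y : Fin 2, q y θ ω) =
      (∑ y : Fin 2, ∑ ω' : Fin 2, q y θ ω') *
      (∑ y : Fin 2, ∑ θ' : Bool, q y θ' ω))
    (hinf : ∀ (k : Fin 2) (θ : Bool),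
      (q k θ k / ∑ y : Fin 2, q y θ k) /
        (q k θ (1 - k) / ∑ y : Fin 2, q y θ (1 - k)) ≥ 1) :
    ∀ (k : Fin 2) (θ : Bool),
      q k θ k / (∑ ω : Fin 2, q k θ ω) ≥ ∑ y : Fin 2, ∑ θ' : Bool, q y θ' k := by
  intro k θ
  have h1 := hinf k θ
  have h2 := hindep θ k
  have p00 := hpos 0 θ 0; have p01 := hpos 0 θ 1
  have p10 := hpos 1 θ 0; have p11 := hpos 1 θ 1
  fin_cases k <;>
  · simp only [Fin.sum_univ_two, Fin.isValue] at *
    norm_num at h1 h2 ⊢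
    rw [one_le_div (by positivity),
      div_le_div_iff₀ (by positivity) (by positivity)] at h1
    rw [mul_comm, eq_comm, ← eq_div_iff (by positivity)] at h2
    rw [h2, div_le_div_iff₀ (by positivity) (by positivity)]
    nlinarith [h1]
end

section
/- Under a preference-based trust model, for each k the posterior after (y^S_k, M) is strictly below the posterior after y^S_k alone, and the posterior after (y^S_k, A) is strictly above it. Moreover, if for some k and θ the alignment probabilities satisfy G(ω^R_k, θ) < 1 − G(ω^R_{-k}, θ), then backlash occurs: P(ω^R_k | y^S_k, θ) < P(ω^R_k). -/
/-- Mediant/cross-ratio core inequality for part (a): under independence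
(`eT1`–`eF2`) and the alignment inequalities (`hal1`, `hal2`), the
type-`A` posterior odds dominate the type-`M` ones: `xF * yT < xT * yF`. -/
lemma core_cross (xT yT uT vT xF yF uF vF TT TF Wk Wk' : ℝ)
    (hxF : 0 < xF) (hyT : 0 < yT) (hvT : 0 < vT)
    (hTT : 0 < TT) (hTF : 0 < TF) (hWk : 0 < Wk)
    (eT1 : xT + uT = TT * Wk) (eF1 : xF + uF = TF * Wk)
    (eT2 : yT + vT = TT * Wk') (eF2 : yF + vF = TF * Wk')
    (hal1 : xF * (xT + uT) < xT * (xF + uF))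
    (hal2 : vF * (yT + vT) < vT * (yF + vF)) :
    xF * yT < xT * yF := by
  have hWk' : 0 < Wk' := by
    have h : 0 < TT * Wk' := by linarith
    rcases mul_pos_iff.mp h with ⟨_, h2⟩ | ⟨h1, _⟩
    · exact h2
    · linarith
  have hA : xF * TT < xT * TF := by
    apply lt_of_mul_lt_mul_right _ hWk.le
    calc xF * TT * Wk = xF * (xT + uT) := by rw [eT1]; ring
      _ < xT * (xF + uF) := hal1
      _ = xT * TF * Wk := by rw [eF1]; ring
  have hV : vF * TT < vT * TF := by
    apply lt_of_mul_lt_mul_right _ hWk'.le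
    calc vF * TT * Wk' = vF * (yT + vT) := by rw [eT2]; ring
      _ < vT * (yF + vF) := hal2
      _ = vT * TF * Wk' := by rw [eF2]; ring
  have e1 : yT = TT * Wk' - vT := by linarith
  have e2 : yF = TF * Wk' - vF := by linarith
  have hY : yT * TF < yF * TT := by
    calc yT * TF = TT * TF * Wk' - vT * TF := by rw [e1]; ring
      _ < TT * TF * Wk' - vF * TT := by linarith
      _ = yF * TT := by rw [e2]; ring
  have hp : (xF * TT) * (yT * TF) < (xT * TF) * (yF * TT) :=
    mul_lt_mul'' hA hY (by positivity) (by positivity)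
  apply lt_of_mul_lt_mul_right _ (mul_pos hTT hTF).le
  calc xF * yT * (TT * TF) = (xF * TT) * (yT * TF) := by ring
    _ < (xT * TF) * (yF * TT) := hp
    _ = xT * yF * (TT * TF) := by ring

/-- Backlash core inequality for part (b). -/
lemma core_b (x y u v T W W' : ℝ)
    (hx : 0 < x) (hy : 0 < y) (hu : 0 < u) (hv : 0 < v) (hT : 0 < T)
    (e1 : x + u = T * W) (e2 : y + v = T * W') (eW : W + W' = 1)
    (hyp : x / (x + u) < 1 - v / (y + v)) :
    x / (x + y) < W := by
  have hxu : 0 < x + u := by linarith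
  have hyv : 0 < y + v := by linarith
  have h1 : x / (x + u) + v / (y + v) < 1 := by linarith
  rw [div_add_div _ _ hxu.ne' hyv.ne', div_lt_one (by positivity)] at h1
  rw [e1, e2] at h1
  have h2 : x * W' + W * v < T * (W * W') := by
    apply lt_of_mul_lt_mul_left _ hT.le
    calc T * (x * W' + W * v) = x * (T * W') + T * W * v := by ring
      _ < T * W * (T * W') := h1
      _ = T * (T * (W * W')) := by ring
  rw [div_lt_iff₀ (by linarith : (0:ℝ) < x + y)]
  have hy2 : y = T * W' - v := by linarith
  have e3 : x * W + x * W' = x := by linear_combination x * eW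
  have e4 : W * y = T * W * W' - W * v := by linear_combination W * hy2
  nlinarith [h2, e3, e4]

/-- Preference-based trust model. Since the sender is perfectly
informed and truthful about `ω^S` (`y^S = ω^S`), the model is a full-support
joint pmf `q θ s ω` of `(θ^S, ω^S, ω^R)`, with `θ = true` the aligned type
`A`, `θ = false` the misaligned type `M`, `θ^S` independent of `ω^R`
(`hindep`), and where cultural alignment predicts economic alignment:
`G(ω^R_r, A) > G(ω^R_r, M)` for all `r`, with
`G(ω^R_r, θ) = P(ω^S_r | ω^R_r, θ)` (`halign`). Then (a) for each `k` the
posterior on `ω^R_k` after `(y^S_k, M)` is strictly below the posterior after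
`y^S_k` alone, which is strictly below the posterior after `(y^S_k, A)`; and
(b) for any `k, θ`, if `G(ω^R_k, θ) < 1 − G(ω^R_{-k}, θ)` then backlash
occurs: `P(ω^R_k | y^S_k, θ) < P(ω^R_k)`. -/
theorem preference_trust_spillovers_and_backlash
    (q : Bool → Fin 2 → Fin 2 → ℝ)
    (hpos : ∀ θ s ω, 0 < q θ s ω)
    (hsum : ∑ θ : Bool, ∑ s : Fin 2, ∑ ω : Fin 2, q θ s ω = 1)
    (hindep : ∀ θ ω, (∑ s : Fin 2, q θ s ω) =
      (∑ s : Fin 2, ∑ ω' : Fin 2, q θ s ω') *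
      (∑ θ' : Bool, ∑ s : Fin 2, q θ' s ω))
    (halign : ∀ r : Fin 2,
      q true r r / (∑ s : Fin 2, q true s r) >
        q false r r / (∑ s : Fin 2, q false s r)) :
    (∀ k : Fin 2,
      q false k k / (∑ ω : Fin 2, q false k ω) <
        (∑ θ : Bool, q θ k k) / (∑ θ : Bool, ∑ ω : Fin 2, q θ k ω) ∧
      (∑ θ : Bool, q θ k k) / (∑ θ : Bool, ∑ ω : Fin 2, q θ k ω) <
        q true k k / (∑ ω : Fin 2, q true k ω)) ∧
    (∀ (k : Fin 2) (θ : Bool),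
      q θ k k / (∑ s : Fin 2, q θ s k) <
          1 - q θ (1 - k) (1 - k) / (∑ s : Fin 2, q θ s (1 - k)) →
      q θ k k / (∑ ω : Fin 2, q θ k ω) <
        ∑ θ' : Bool, ∑ s : Fin 2, q θ' s k) := by
  simp only [Fin.sum_univ_two, Fintype.sum_bool] at hsum hindep halign ⊢
  constructor
  · intro k
    fin_cases k
    all_goals simp only [Fin.mk_zero, Fin.mk_one]
    · -- k = 0
      have hal1 := halign 0
      have hal2 := halign 1
      rw [gt_iff_lt, div_lt_div_iff₀
        (by linarith [hpos false 0 0, hpos false 1 0])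
        (by linarith [hpos true 0 0, hpos true 1 0])] at hal1
      rw [gt_iff_lt, div_lt_div_iff₀
        (by linarith [hpos false 0 1, hpos false 1 1])
        (by linarith [hpos true 0 1, hpos true 1 1])] at hal2
      have hc : q false 0 0 * q true 0 1 < q true 0 0 * q false 0 1 :=
        core_cross (q true 0 0) (q true 0 1) (q true 1 0) (q true 1 1)
          (q false 0 0) (q false 0 1) (q false 1 0) (q false 1 1)
          (q true 0 0 + q true 0 1 + (q true 1 0 + q true 1 1))
          (q false 0 0 + q false 0 1 + (q false 1 0 + q false 1 1))
          (q true 0 0 + q true 1 0 + (q false 0 0 + q false 1 0))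
          (q true 0 1 + q true 1 1 + (q false 0 1 + q false 1 1))
          (hpos false 0 0) (hpos true 0 1) (hpos true 1 1)
          (by linarith [hpos true 0 0, hpos true 0 1, hpos true 1 0, hpos true 1 1])
          (by linarith [hpos false 0 0, hpos false 0 1, hpos false 1 0, hpos false 1 1])
          (by linarith [hpos true 0 0, hpos true 1 0, hpos false 0 0, hpos false 1 0])
          (by linear_combination hindep true 0)
          (by linear_combination hindep false 0)
          (by linear_combination hindep true 1)
          (by linear_combination hindep false 1)
          (by linarith [hal1]) (by linarith [hal2])
      constructor
      · rw [div_lt_div_iff₀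
          (by linarith [hpos false 0 0, hpos false 0 1])
          (by linarith [hpos true 0 0, hpos true 0 1, hpos false 0 0, hpos false 0 1])]
        nlinarith [hc]
      · rw [div_lt_div_iff₀
          (by linarith [hpos true 0 0, hpos true 0 1, hpos false 0 0, hpos false 0 1])
          (by linarith [hpos true 0 0, hpos true 0 1])]
        nlinarith [hc]
    · -- k = 1
      have hal1 := halign 1
      have hal2 := halign 0
      rw [gt_iff_lt, div_lt_div_iff₀
        (by linarith [hpos false 0 1, hpos false 1 1])
        (by linarith [hpos true 0 1, hpos true 1 1])] at hal1
      rw [gt_iff_lt, div_lt_div_iff₀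
        (by linarith [hpos false 0 0, hpos false 1 0])
        (by linarith [hpos true 0 0, hpos true 1 0])] at hal2
      have hc : q false 1 1 * q true 1 0 < q true 1 1 * q false 1 0 :=
        core_cross (q true 1 1) (q true 1 0) (q true 0 1) (q true 0 0)
          (q false 1 1) (q false 1 0) (q false 0 1) (q false 0 0)
          (q true 0 0 + q true 0 1 + (q true 1 0 + q true 1 1))
          (q false 0 0 + q false 0 1 + (q false 1 0 + q false 1 1))
          (q true 0 1 + q true 1 1 + (q false 0 1 + q false 1 1))
          (q true 0 0 + q true 1 0 + (q false 0 0 + q false 1 0))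
          (hpos false 1 1) (hpos true 1 0) (hpos true 0 0)
          (by linarith [hpos true 0 0, hpos true 0 1, hpos true 1 0, hpos true 1 1])
          (by linarith [hpos false 0 0, hpos false 0 1, hpos false 1 0, hpos false 1 1])
          (by linarith [hpos true 0 1, hpos true 1 1, hpos false 0 1, hpos false 1 1])
          (by linear_combination hindep true 1)
          (by linear_combination hindep false 1)
          (by linear_combination hindep true 0)
          (by linear_combination hindep false 0)
          (by linarith [hal1]) (by linarith [hal2])
      constructor
      · rw [div_lt_div_iff₀
          (by linarith [hpos false 1 0, hpos false 1 1])
          (by linarith [hpos true 1 0, hpos true 1 1, hpos false 1 0, hpos false 1 1])]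
        nlinarith [hc]
      · rw [div_lt_div_iff₀
          (by linarith [hpos true 1 0, hpos true 1 1, hpos false 1 0, hpos false 1 1])
          (by linarith [hpos true 1 0, hpos true 1 1])]
        nlinarith [hc]
  · intro k θ h
    fin_cases k
    all_goals simp only [Fin.mk_zero, Fin.mk_one, sub_zero, sub_self] at h ⊢
    · -- k = 0
      exact core_b (q θ 0 0) (q θ 0 1) (q θ 1 0) (q θ 1 1)
        (q θ 0 0 + q θ 0 1 + (q θ 1 0 + q θ 1 1))
        (q true 0 0 + q true 1 0 + (q false 0 0 + q false 1 0))
        (q true 0 1 + q true 1 1 + (q false 0 1 + q false 1 1))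
        (hpos θ 0 0) (hpos θ 0 1) (hpos θ 1 0) (hpos θ 1 1)
        (by linarith [hpos θ 0 0, hpos θ 0 1, hpos θ 1 0, hpos θ 1 1])
        (by linear_combination hindep θ 0)
        (by linear_combination hindep θ 1)
        (by linear_combination hsum)
        h
    · -- k = 1
      rw [show q θ 1 0 + q θ 1 1 = q θ 1 1 + q θ 1 0 from add_comm _ _]
      exact core_b (q θ 1 1) (q θ 1 0) (q θ 0 1) (q θ 0 0)
        (q θ 0 0 + q θ 0 1 + (q θ 1 0 + q θ 1 1))
        (q true 0 1 + q true 1 1 + (q false 0 1 + q false 1 1))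
        (q true 0 0 + q true 1 0 + (q false 0 0 + q false 1 0))
        (hpos θ 1 1) (hpos θ 1 0) (hpos θ 0 1) (hpos θ 0 0)
        (by linarith [hpos θ 0 0, hpos θ 0 1, hpos θ 1 0, hpos θ 1 1])
        (by linear_combination hindep θ 1)
        (by linear_combination hindep θ 0)
        (by linear_combination hsum)
        (by rw [add_comm (q θ 1 1) (q θ 0 1), add_comm (q θ 1 0) (q θ 0 0)]; exact h)
end

section
/- Given full-support reference beliefs π^G, π^Ḡ on a binary state space and identity strength 0 < χ < 1/2, the pair of distorted reference beliefs (π̃^G, π̃^Ḡ) defined by the fixed-point conditions π̃^G(ω) ∝ π^G(ω)·(π̃^G(ω)/π̃^Ḡ(ω))^χ and π̃^Ḡ(ω) ∝ π^Ḡ(ω)·(π̃^Ḡ(ω)/π̃^G(ω))^χ implies that the ratio (π̃^G(ω)/π̃^Ḡ(ω))^χ is proportional (in ω) to (π^G(ω)/π^Ḡ(ω))^{χ/(1−2χ)}; consequently π̃^G(ω) ∝ π^G(ω)·(π^G(ω)/π^Ḡ(ω))^{χ/(1−2χ)}. -/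
/-- Given full-support reference beliefs `pG, pg` on binary Ω
and identity strength `0 < χ < 1/2`, if the distorted reference beliefs
`tG, tg` satisfy the fixed-point conditions
`tG(ω) ∝ pG(ω)·(tG(ω)/tg(ω))^χ` and `tg(ω) ∝ pg(ω)·(tg(ω)/tG(ω))^χ`,
then `(tG(ω)/tg(ω))^χ` is proportional in `ω` to
`(pG(ω)/pg(ω))^(χ/(1−2χ))`, and consequently
`tG(ω) ∝ pG(ω)·(pG(ω)/pg(ω))^(χ/(1−2χ))`. -/
theorem identity_fixed_point_solution
    (χ : ℝ) (hχ0 : 0 < χ) (hχ : χ < 1/2)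
    (pG pg tG tg : Fin 2 → ℝ)
    (hpG : ∀ ω, 0 < pG ω) (hpg : ∀ ω, 0 < pg ω)
    (htG : ∀ ω, 0 < tG ω) (htg : ∀ ω, 0 < tg ω)
    (hpGsum : ∑ ω : Fin 2, pG ω = 1) (hpgsum : ∑ ω : Fin 2, pg ω = 1)
    (htGsum : ∑ ω : Fin 2, tG ω = 1) (htgsum : ∑ ω : Fin 2, tg ω = 1)
    (hfixG : ∀ ω, tG ω = pG ω * (tG ω / tg ω) ^ χ /
      (∑ ω' : Fin 2, pG ω' * (tG ω' / tg ω') ^ χ))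
    (hfixg : ∀ ω, tg ω = pg ω * (tg ω / tG ω) ^ χ /
      (∑ ω' : Fin 2, pg ω' * (tg ω' / tG ω') ^ χ)) :
    (∃ c > 0, ∀ ω, (tG ω / tg ω) ^ χ =
      c * (pG ω / pg ω) ^ (χ / (1 - 2 * χ))) ∧
    (∀ ω, tG ω = pG ω * (pG ω / pg ω) ^ (χ / (1 - 2 * χ)) /
      (∑ ω' : Fin 2, pG ω' * (pG ω' / pg ω') ^ (χ / (1 - 2 * χ)))) := by
  have h12 : (0:ℝ) < 1 - 2 * χ := by linarith
  set α := χ / (1 - 2 * χ) with hα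
  set ZG := ∑ ω' : Fin 2, pG ω' * (tG ω' / tg ω') ^ χ with hZG
  set Zg := ∑ ω' : Fin 2, pg ω' * (tg ω' / tG ω') ^ χ with hZg
  have hZGpos : 0 < ZG := Finset.sum_pos
    (fun i _ => mul_pos (hpG i) (Real.rpow_pos_of_pos (div_pos (htG i) (htg i)) χ))
    Finset.univ_nonempty
  have hZgpos : 0 < Zg := Finset.sum_pos
    (fun i _ => mul_pos (hpg i) (Real.rpow_pos_of_pos (div_pos (htg i) (htG i)) χ))
    Finset.univ_nonempty
  have hcpos : 0 < (Zg / ZG) ^ α := Real.rpow_pos_of_pos (div_pos hZgpos hZGpos) α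
  have key : ∀ ω, (tG ω / tg ω) ^ χ = (Zg / ZG) ^ α * (pG ω / pg ω) ^ α := by
    intro ω
    have hr : 0 < tG ω / tg ω := div_pos (htG ω) (htg ω)
    have hapos : 0 < (tG ω / tg ω) ^ χ := Real.rpow_pos_of_pos hr χ
    have h1 : tG ω * ZG = pG ω * (tG ω / tg ω) ^ χ :=
      ((div_eq_iff hZGpos.ne').mp (hfixG ω).symm).symm
    have hinv : (tg ω / tG ω) ^ χ = ((tG ω / tg ω) ^ χ)⁻¹ := by
      rw [← Real.inv_rpow hr.le, inv_div]
    have h2a : tg ω * Zg = pg ω * ((tG ω / tg ω) ^ χ)⁻¹ := by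
      rw [← hinv]; exact ((div_eq_iff hZgpos.ne').mp (hfixg ω).symm).symm
    have h2 : tg ω * Zg * ((tG ω / tg ω) ^ χ) = pg ω := by
      rw [h2a, mul_assoc, inv_mul_cancel₀ hapos.ne', mul_one]
    have hb : (tG ω / tg ω) ^ (1 - 2*χ) * ((tG ω / tg ω) ^ χ) * ((tG ω / tg ω) ^ χ)
        = tG ω / tg ω := by
      rw [← Real.rpow_add hr, ← Real.rpow_add hr,
        show 1 - 2*χ + χ + χ = 1 by ring, Real.rpow_one]
    have htgne : tg ω ≠ 0 := (htg ω).ne'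
    have hb' : (tG ω / tg ω) ^ (1 - 2*χ) * ((tG ω / tg ω) ^ χ) * ((tG ω / tg ω) ^ χ)
        * tg ω = tG ω := by
      rw [hb]; field_simp
    have hB : (tG ω / tg ω) ^ (1 - 2*χ) = (pG ω / pg ω) * (Zg / ZG) := by
      have h3 : ((pG ω * Zg) - (tG ω / tg ω) ^ (1 - 2*χ) * (pg ω * ZG))
          * ((tG ω / tg ω) ^ χ * (tG ω / tg ω) ^ χ) = 0 := by
        linear_combination (-(Zg * (tG ω / tg ω) ^ χ)) * h1
          + (tG ω / tg ω) ^ (1 - 2*χ) * ZG * ((tG ω / tg ω) ^ χ) ^ 2 * h2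
          + (-(Zg * ZG * (tG ω / tg ω) ^ χ)) * hb'
      have h4 : (pG ω * Zg) - (tG ω / tg ω) ^ (1 - 2*χ) * (pg ω * ZG) = 0 := by
        rcases mul_eq_zero.mp h3 with h | h
        · exact h
        · exact absurd h (mul_pos hapos hapos).ne'
      rw [div_mul_div_comm, eq_div_iff (mul_pos (hpg ω) hZGpos).ne']
      linarith
    have hexp : (1 - 2*χ) * α = χ := by
      rw [hα]; field_simp
    calc (tG ω / tg ω) ^ χ
        = ((tG ω / tg ω) ^ (1 - 2*χ)) ^ α := by
          rw [← Real.rpow_mul hr.le, hexp]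
      _ = ((pG ω / pg ω) * (Zg / ZG)) ^ α := by rw [hB]
      _ = (Zg / ZG) ^ α * (pG ω / pg ω) ^ α := by
          rw [Real.mul_rpow (div_pos (hpG ω) (hpg ω)).le (div_pos hZgpos hZGpos).le]
          ring
  have hS : ZG = (Zg / ZG) ^ α * ∑ ω' : Fin 2, pG ω' * (pG ω' / pg ω') ^ α := by
    rw [Finset.mul_sum, hZG]
    exact Finset.sum_congr rfl (fun i _ => by rw [key i]; ring)
  have hSpos : 0 < ∑ ω' : Fin 2, pG ω' * (pG ω' / pg ω') ^ α := Finset.sum_pos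
    (fun i _ => mul_pos (hpG i) (Real.rpow_pos_of_pos (div_pos (hpG i) (hpg i)) α))
    Finset.univ_nonempty
  refine ⟨⟨(Zg / ZG) ^ α, hcpos, key⟩, fun ω => ?_⟩
  rw [hfixG ω, key ω, div_eq_div_iff hZGpos.ne' hSpos.ne']
  linear_combination (-(pG ω * (pG ω / pg ω) ^ α)) * hS
end

section
/- In the identity-threat updating model, after a bundled message (π^S_k, Ḡ) from a culturally misaligned sender, disagreement spillovers occur: the receiver's distorted posterior probability of ω_k is strictly below the rational posterior probability of ω_k (which equals the posterior after the economic message alone). -/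
/-- Helper: if `a < 1 < b` and `p, q > 0` with `p + q = 1`, then
`p*a / (p*a + q*b) < p`. -/
lemma aux_ratio_lt (p q a b : ℝ) (hp : 0 < p) (hq : 0 < q) (hpq : p + q = 1)
    (ha : 0 < a) (ha1 : a < 1) (hb : 1 < b) :
    p * a / (p * a + q * b) < p := by
  have hD : 0 < p * a + q * b := by positivity
  rw [div_lt_iff₀ hD]
  have h1 : a < p * a + q * b := by nlinarith
  nlinarith

/-- Identity-threat updating. On binary Ω with rational
(full-support) posterior `nu` after the economic message `π^S_k` (the
rational posterior is unaffected by the cultural message), common initial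
reference belief `ph = π̂`, sender message `pS = π^S_k` with
`pS(ω_k) > ph(ω_k)`, and identity strength `χ = χ(Ḡ) ∈ (0, 1/2)`, the
distorted posterior after the misaligned bundled message `(π^S_k, Ḡ)`,
`ν̃(ω) ∝ nu(ω)·(ph(ω)/pS(ω))^(χ/(1−2χ))`, puts strictly less probability on
`ω_k` than the rational posterior: disagreement spillovers occur. -/
theorem identity_threat_disagreement_spillover
    (χ : ℝ) (hχ0 : 0 < χ) (hχ : χ < 1/2) (k : Fin 2)
    (nu ph pS : Fin 2 → ℝ)
    (hnu : ∀ ω, 0 < nu ω) (hnus : ∑ ω : Fin 2, nu ω = 1)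
    (hph : ∀ ω, 0 < ph ω) (hphs : ∑ ω : Fin 2, ph ω = 1)
    (hpS : ∀ ω, 0 < pS ω) (hpSs : ∑ ω : Fin 2, pS ω = 1)
    (hmsg : pS k > ph k) :
    nu k * (ph k / pS k) ^ (χ / (1 - 2 * χ)) /
      (∑ ω : Fin 2, nu ω * (ph ω / pS ω) ^ (χ / (1 - 2 * χ))) < nu k := by
  set t := χ / (1 - 2 * χ) with ht
  have htpos : 0 < t := by
    apply div_pos hχ0; linarith
  have hlt1 : ∀ ω : Fin 2, ph ω < pS ω → (ph ω / pS ω) ^ t < 1 := by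
    intro ω h
    exact Real.rpow_lt_one (le_of_lt (div_pos (hph ω) (hpS ω)))
      ((div_lt_one (hpS ω)).2 h) htpos
  have hgt1 : ∀ ω : Fin 2, pS ω < ph ω → 1 < (ph ω / pS ω) ^ t := by
    intro ω h
    have : 1 < ph ω / pS ω := (one_lt_div (hpS ω)).2 h
    exact (Real.one_lt_rpow_iff_of_pos (div_pos (hph ω) (hpS ω))).2 (Or.inl ⟨this, htpos⟩)
  fin_cases k
  · simp only [Fin.sum_univ_two] at *
    have hmsg' : ph 0 < pS 0 := hmsg
    have h1 : pS 1 < ph 1 := by linarith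
    exact aux_ratio_lt (nu 0) (nu 1) _ _ (hnu 0) (hnu 1) hnus
      (Real.rpow_pos_of_pos (div_pos (hph 0) (hpS 0)) t) (hlt1 0 hmsg') (hgt1 1 h1)
  · simp only [Fin.sum_univ_two] at *
    have hmsg' : ph 1 < pS 1 := hmsg
    have h1 : pS 0 < ph 0 := by linarith
    rw [show nu 0 * (ph 0 / pS 0) ^ t + nu 1 * (ph 1 / pS 1) ^ t
        = nu 1 * (ph 1 / pS 1) ^ t + nu 0 * (ph 0 / pS 0) ^ t by ring]
    exact aux_ratio_lt (nu 1) (nu 0) _ _ (hnu 1) (hnu 0) (by linarith)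
      (Real.rpow_pos_of_pos (div_pos (hph 1) (hpS 1)) t) (hlt1 1 hmsg') (hgt1 0 h1)
end

section
/- In the voting-model platform game, if platform q^A is a best response of party A to q^B, then the two groups' relative policy evaluations cannot be tied: E_{ν^{SP}}[U^{SP}(q^A)] − E_{ν^{SP}}[U^{SP}(q^B)] ≠ E_{ν^{SC}}[U^{SC}(q^A)] − E_{ν^{SC}}[U^{SC}(q^B)]; in particular, any best response satisfies q^A ≠ q^B. -/
/-!
At a tie `dSP = dSC` the payoff of `A` has a convex kink in the cultural coordinate `x`.
Since `v` is strictly concave with `v 0 = 0`, `v 1 = 1`, we have `v s > s` on `(0,1)`, so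
`a + b > 1` for `a = v sSP`, `b = v (1 - sSP)`, and the payoff is the maximum of the two affine
combinations `a dSP + (1 - a) dSC` and `(1 - b) dSP + b dSC`. Along `x` each of these is a
parabola `const - (x - c)²` with vertex `c = a xSP + (1 - a) xSC`, resp. `(1 - b) xSP + b xSC`;
the two vertices differ, so the tie point misses one of them, and moving `x` to that vertex
strictly raises the payoff.
-/

open Set

lemma lt_apply_of_strictConcaveOn_Icc {v : ℝ → ℝ} (hconc : StrictConcaveOn ℝ (Icc 0 1) v)
    (hv0 : v 0 = 0) (hv1 : v 1 = 1) {s : ℝ} (hs : s ∈ Ioo 0 1) : s < v s := by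
  have h := hconc.2 (x := 0) (y := 1) (by simp) (by simp) zero_ne_one
    (sub_pos.2 hs.2) hs.1 (by ring)
  simpa only [smul_eq_mul, hv0, hv1, mul_zero, mul_one, zero_add] using h

lemma min_add_ite_eq_max {a b : ℝ} (hab : 1 ≤ a + b) (u w : ℝ) :
    min u w + (if u ≥ w then (u - w) * a else (w - u) * b)
      = max (a * u + (1 - a) * w) ((1 - b) * u + b * w) := by
  rcases le_or_gt w u with h | h
  · rw [min_eq_right h, if_pos h, max_eq_left (by nlinarith)]
    ring
  · rw [min_eq_left h.le, if_neg (not_le.2 h), max_eq_right (by nlinarith)]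
    ring

lemma exists_max_lt_of_tie {a b p r x : ℝ} {u w : ℝ → ℝ} (hab : 1 < a + b) (hpr : p ≠ r)
    (hu : ∀ y, u y = u x + (x - p) ^ 2 - (y - p) ^ 2)
    (hw : ∀ y, w y = w x + (x - r) ^ 2 - (y - r) ^ 2) (htie : u x = w x) :
    ∃ y, max (a * u x + (1 - a) * w x) ((1 - b) * u x + b * w x)
      < max (a * u y + (1 - a) * w y) ((1 - b) * u y + b * w y) := by
  have at_tie : ∀ s t : ℝ, s + t = 1 → s * u x + t * w x = u x := fun s t hst => by
    rw [← htie, ← add_mul, hst, one_mul]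
  have at_vertex : ∀ s t : ℝ, s + t = 1 →
      s * u (s * p + t * r) + t * w (s * p + t * r) = u x + (x - (s * p + t * r)) ^ 2 :=
    fun s t hst => by
      rw [hu, hw, ← htie, show t = 1 - s by linarith]
      ring
  rw [at_tie a (1 - a) (by ring), at_tie (1 - b) b (by ring), max_self]
  have hvertices : a * p + (1 - a) * r ≠ (1 - b) * p + b * r := fun h =>
    mul_ne_zero (by linarith : a + b - 1 ≠ 0) (sub_ne_zero.2 hpr) (by linear_combination h)
  by_cases hx : x = a * p + (1 - a) * r
  · refine ⟨(1 - b) * p + b * r, lt_max_of_lt_right ?_⟩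
    rw [at_vertex (1 - b) b (by ring)]
    have : x - ((1 - b) * p + b * r) ≠ 0 := sub_ne_zero.2 (hx ▸ hvertices)
    exact lt_add_of_pos_right _ (by positivity)
  · refine ⟨a * p + (1 - a) * r, lt_max_of_lt_left ?_⟩
    rw [at_vertex a (1 - a) (by ring)]
    have : x - (a * p + (1 - a) * r) ≠ 0 := sub_ne_zero.2 hx
    exact lt_add_of_pos_right _ (by positivity)

theorem best_response_breaks_ties_general
    (v : ℝ → ℝ)
    (hconc : StrictConcaveOn ℝ (Set.Icc 0 1) v)
    (hv0 : v 0 = 0) (hv1 : v 1 = 1)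
    (xSP xSC sSP φ νSP νSC : ℝ)
    (hx : xSP > xSC) (hs : sSP ∈ Set.Ioo (0:ℝ) 1)
    (hφ : φ > 1 + (xSP - xSC) ^ 2)
    (qA qB : ℝ × ℝ) :
    let EUSP : ℝ × ℝ → ℝ := fun q =>
      -(q.1 - xSP) ^ 2 - (q.2 - νSP) ^ 2 - νSP * (1 - νSP)
    let EUSC : ℝ × ℝ → ℝ := fun q =>
      -(q.1 - xSC) ^ 2 - (q.2 - νSC) ^ 2 - νSC * (1 - νSC)
    let dSP : ℝ × ℝ → ℝ × ℝ → ℝ := fun q q' => EUSP q - EUSP q'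
    let dSC : ℝ × ℝ → ℝ × ℝ → ℝ := fun q q' => EUSC q - EUSC q'
    -- expected payoff of A against qB: vote share is 1 below both
    -- thresholds, the advantaged group's share in between, 0 above both
    let VA : ℝ × ℝ → ℝ × ℝ → ℝ := fun q q' =>
      (φ + min (dSP q q') (dSC q q')) / (2 * φ)
        + (if dSP q q' ≥ dSC q q'
            then (dSP q q' - dSC q q') * v sSP
            else (dSC q q' - dSP q q') * v (1 - sSP)) / (2 * φ)
    (∀ q : ℝ × ℝ, VA q qB ≤ VA qA qB) →
      dSP qA qB ≠ dSC qA qB ∧ qA ≠ qB := by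
  intro EUSP EUSC dSP dSC VA hbr
  have hφ0 : 0 < φ := by linarith [sq_nonneg (xSP - xSC)]
  have hab : 1 < v sSP + v (1 - sSP) := by
    have hs' : 1 - sSP ∈ Ioo (0 : ℝ) 1 := ⟨by linarith [hs.2], by linarith [hs.1]⟩
    linarith [lt_apply_of_strictConcaveOn_Icc hconc hv0 hv1 hs,
      lt_apply_of_strictConcaveOn_Icc hconc hv0 hv1 hs']
  have hVA : ∀ q, VA q qB = (φ + max (v sSP * dSP q qB + (1 - v sSP) * dSC q qB)
      ((1 - v (1 - sSP)) * dSP q qB + v (1 - sSP) * dSC q qB)) / (2 * φ) := fun q => by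
    rw [← min_add_ite_eq_max hab.le, ← add_assoc, add_div]
  have hne : dSP qA qB ≠ dSC qA qB := by
    intro htie
    obtain ⟨x, hgain⟩ := exists_max_lt_of_tie (u := fun x => dSP (x, qA.2) qB)
      (w := fun x => dSC (x, qA.2) qB) hab hx.ne'
      (fun _ => by simp only [dSP, EUSP]; ring) (fun _ => by simp only [dSC, EUSC]; ring) htie
    have hle := hbr (x, qA.2)
    rw [hVA, hVA, div_le_div_iff_of_pos_right (by positivity)] at hle
    exact absurd hle (not_le.2 (add_lt_add_right hgain φ))
  exact ⟨hne, fun h => hne (by simp only [h, dSP, dSC, sub_self])⟩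

/-- In the voting-model platform game, groups `SP, SC` have
ideal cultural policies `xSP > xSC`, economic beliefs `νSP, νSC ∈ [0,1]`,
shares `sSP ∈ (0,1)` and `1 − sSP`; the expected utility of group `G` from a
platform `q = (x,y)` is `−(x − x^G)² − (y − ν^G)² − ν^G(1 − ν^G)`; the
popularity shock is uniform on `[−φ, φ]` with `φ > 1 + (xSP − xSC)²`, a group
votes for `A` iff its expected-utility difference exceeds the shock, and
party `A`'s expected payoff is the expectation of `v` (strictly increasing on
`[0,1]`, strictly concave, `v 0 = 0`, `v 1 = 1`) of its vote share. If
platform `qA` is a best response to `qB`, then the two groups' relative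
policy evaluations are not tied, and in particular `qA ≠ qB`. -/
theorem best_response_breaks_ties
    (v : ℝ → ℝ)
    (hmono : StrictMonoOn v (Set.Icc 0 1))
    (hconc : StrictConcaveOn ℝ (Set.Icc 0 1) v)
    (hv0 : v 0 = 0) (hv1 : v 1 = 1)
    (xSP xSC sSP φ νSP νSC : ℝ)
    (hx : xSP > xSC) (hs : sSP ∈ Set.Ioo (0:ℝ) 1)
    (hνSP : νSP ∈ Set.Icc (0:ℝ) 1) (hνSC : νSC ∈ Set.Icc (0:ℝ) 1)
    (hφ : φ > 1 + (xSP - xSC) ^ 2)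
    (qA qB : ℝ × ℝ) :
    let EUSP : ℝ × ℝ → ℝ := fun q =>
      -(q.1 - xSP) ^ 2 - (q.2 - νSP) ^ 2 - νSP * (1 - νSP)
    let EUSC : ℝ × ℝ → ℝ := fun q =>
      -(q.1 - xSC) ^ 2 - (q.2 - νSC) ^ 2 - νSC * (1 - νSC)
    let dSP : ℝ × ℝ → ℝ × ℝ → ℝ := fun q q' => EUSP q - EUSP q'
    let dSC : ℝ × ℝ → ℝ × ℝ → ℝ := fun q q' => EUSC q - EUSC q'
    -- expected payoff of A against qB: vote share is 1 below both
    -- thresholds, the advantaged group's share in between, 0 above both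
    let VA : ℝ × ℝ → ℝ × ℝ → ℝ := fun q q' =>
      (φ + min (dSP q q') (dSC q q')) / (2 * φ)
        + (if dSP q q' ≥ dSC q q'
            then (dSP q q' - dSC q q') * v sSP
            else (dSC q q' - dSP q q') * v (1 - sSP)) / (2 * φ)
    (∀ q : ℝ × ℝ, VA q qB ≤ VA qA qB) →
      dSP qA qB ≠ dSC qA qB ∧ qA ≠ qB :=
  best_response_breaks_ties_general v hconc hv0 hv1 xSP xSC sSP φ νSP νSC hx hs hφ qA qB
end

section
/- In the media duopoly with maximally differentiated slants b^A = x^{SP}, b^B = x^{SC}, the high-price pair (p^H, p^H) is a Nash equilibrium of the price-setting subgame if and only if the number of issues of disagreement D = ||x^{SP} − x^{SC}||² satisfies D > (p^H − p^L)/c; if D < (p^H − p^L)/c, undercutting to p^L is a strictly profitable deviation (since 2p^L > p^H). -/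
open Classical in
/-- Media duopoly with maximally differentiated slants
`b^A = x^{SP}`, `b^B = x^{SC}`, so each outlet is at squared distance `0`
from its own group and `D = ‖x^{SP} − x^{SC}‖²` from the other. A group
subscribes to the outlet with the lower price-plus-transport cost `p + c·d²`,
splitting evenly at ties; profit is price times number of subscribing groups.
With prices in `{pL, pH}`, `0 < pL < pH < (3/2)·pL`, `c > 0`, the high-price
pair `(pH, pH)` is a Nash equilibrium iff `D > (pH − pL)/c`; and if
`D < (pH − pL)/c`, undercutting to `pL` is strictly profitable. -/
theorem differentiated_slants_high_price_equilibrium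
    (pL pH c D : ℝ) (hL : 0 < pL) (hLH : pL < pH) (hH : pH < 3/2 * pL)
    (hc : 0 < c) (hD : 0 ≤ D) :
    let own : ℝ → ℝ → ℝ := fun pm po =>
      if pm < po + c * D then 1 else if pm = po + c * D then 1/2 else 0
    let away : ℝ → ℝ → ℝ := fun pm po =>
      if pm + c * D < po then 1 else if pm + c * D = po then 1/2 else 0
    let profit : ℝ → ℝ → ℝ := fun pm po => pm * (own pm po + away pm po)
    let isNE : ℝ → ℝ → Prop := fun pa pb =>
      (∀ p ∈ ({pL, pH} : Set ℝ), profit p pb ≤ profit pa pb) ∧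
      (∀ p ∈ ({pL, pH} : Set ℝ), profit p pa ≤ profit pb pa)
    (isNE pH pH ↔ D > (pH - pL) / c) ∧
    (D < (pH - pL) / c → profit pL pH > profit pH pH) := by

  intro own away profit isNE
  have hcD : (0:ℝ) ≤ c * D := by positivity
  have hHH : profit pH pH = pH := by
    simp only [profit, own, away]
    rcases lt_or_eq_of_le hcD with h | h
    · rw [if_pos (by linarith), if_neg (by linarith), if_neg (by linarith)]
      ring
    · rw [if_neg (by linarith), if_pos (by linarith), if_neg (by linarith),
        if_pos (by linarith)]
      ring
  constructor
  · constructor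
    · intro hne
      by_contra hnot
      push_neg at hnot
      have hcd : c * D ≤ pH - pL := by
        have := (le_div_iff₀ hc).mp hnot
        linarith [this]
      have hLpH : profit pL pH ≥ 3/2 * pL := by
        simp only [profit, own, away]
        rw [if_pos (by linarith)]
        rcases lt_or_eq_of_le hcd with h | h
        · rw [if_pos (by linarith)]; linarith
        · rw [if_neg (by linarith), if_pos (by linarith)]; linarith
      have := hne.1 pL (Set.mem_insert _ _)
      rw [hHH] at this
      linarith
    · intro hgt
      have hcd : pH - pL < c * D := by
        have := (div_lt_iff₀ hc).mp hgt
        linarith [this]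
      have hLpH : profit pL pH = pL := by
        simp only [profit, own, away]
        rw [if_pos (by linarith), if_neg (by linarith), if_neg (by linarith)]
        ring
      have key : ∀ p ∈ ({pL, pH} : Set ℝ), profit p pH ≤ profit pH pH := by
        intro p hp
        simp only [Set.mem_insert_iff, Set.mem_singleton_iff] at hp
        rcases hp with rfl | rfl
        · rw [hHH, hLpH]; linarith
        · exact le_refl _
      exact ⟨key, key⟩
  · intro hlt
    have hcd : c * D < pH - pL := by
      have := (lt_div_iff₀ hc).mp hlt
      linarith [this]
    have hLpH : profit pL pH = 2 * pL := by
      simp only [profit, own, away]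
      rw [if_pos (by linarith), if_pos (by linarith)]
      ring
    rw [hLpH, hHH]
    linarith
end

section
/- If the bundled message against the receiver's group is (π^S_k, Ḡ) with π^S_k(ω_k) > π̂(ω_k), then the in-group member receiving the same bundled message aligned with her group, (π^S_k, G), holds final belief exactly equal to the rational Bayesian posterior ν_k; therefore the belief gap between an aligned-group receiver and a misaligned-group receiver is ν_k(ω_k) − ν̃(ω_k) > 0, where ν̃ is the misaligned receiver's distorted posterior. -/
private lemma gap_aux (a b ra rb : ℝ) (ha : 0 < a) (hb : 0 < b)
    (hra : 0 < ra) (hrb : ra < rb) (hsum : a + b = 1) :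
    a - a * ra / (a * ra + b * rb) > 0 := by
  have hS : a * ra + b * rb > 0 := by nlinarith
  have hSra : ra < a * ra + b * rb := by
    nlinarith [mul_pos hb (sub_pos.mpr hrb)]
  have h1 : a * ra / (a * ra + b * rb) < a := by
    rw [div_lt_iff₀ hS]
    nlinarith [mul_lt_mul_of_pos_left hSra ha]
  linarith

/-- With identity strengths `χ(G) = 0` for the in-group and
`χ(Ḡ) = χ ∈ (0,1/2)` for the out-group, rational full-support posterior `nu`
(independent of the cultural message), and `pS(ω_k) > ph(ω_k)`: the receiver
of the aligned bundled message `(π^S_k, G)` holds final belief exactly equal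
to the rational posterior `nu` (her distortion, toward reference beliefs
`π^G = pS`, `π^Ḡ = ph`, has strength `0`), while the misaligned receiver's
distorted posterior `ν̃(ω) ∝ nu(ω)(ph(ω)/pS(ω))^(χ/(1−2χ))` satisfies
`nu(ω_k) − ν̃(ω_k) > 0`. -/
theorem aligned_vs_misaligned_belief_gap
    (χ : ℝ) (hχ0 : 0 < χ) (hχ : χ < 1/2) (k : Fin 2)
    (nu ph pS : Fin 2 → ℝ)
    (hnu : ∀ ω, 0 < nu ω) (hnus : ∑ ω : Fin 2, nu ω = 1)
    (hph : ∀ ω, 0 < ph ω) (hphs : ∑ ω : Fin 2, ph ω = 1)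
    (hpS : ∀ ω, 0 < pS ω) (hpSs : ∑ ω : Fin 2, pS ω = 1)
    (hmsg : pS k > ph k) :
    (∀ ω : Fin 2,
      nu ω * (pS ω / ph ω) ^ ((0:ℝ) / (1 - 2 * 0)) /
        (∑ ω' : Fin 2, nu ω' * (pS ω' / ph ω') ^ ((0:ℝ) / (1 - 2 * 0))) =
      nu ω) ∧
    nu k - nu k * (ph k / pS k) ^ (χ / (1 - 2 * χ)) /
        (∑ ω : Fin 2, nu ω * (ph ω / pS ω) ^ (χ / (1 - 2 * χ))) > 0 := by
  constructor
  · intro ω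
    have h0 : ((0:ℝ) / (1 - 2 * 0)) = 0 := by norm_num
    rw [Fin.sum_univ_two] at hnus
    simp only [h0, Real.rpow_zero, mul_one, Fin.sum_univ_two, hnus, div_one]
  · set t : ℝ := χ / (1 - 2 * χ) with ht
    have htpos : 0 < t := div_pos hχ0 (by linarith)
    rw [Fin.sum_univ_two] at hnus hphs hpSs
    have key : ∀ i j : Fin 2, nu i + nu j = 1 → pS i > ph i → ph j = 1 - ph i → pS j = 1 - pS i →
        nu i - nu i * (ph i / pS i) ^ t /
          (nu i * (ph i / pS i) ^ t + nu j * (ph j / pS j) ^ t) > 0 := by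
      intro i j hns hm hpj hSj
      have h1 : ph i / pS i < ph j / pS j := by
        rw [div_lt_div_iff₀ (hpS i) (hpS j)]
        rw [hpj, hSj]; nlinarith [hph i, hpS i, hpS j]
      have hr1 : (0:ℝ) < (ph i / pS i) ^ t :=
        Real.rpow_pos_of_pos (div_pos (hph i) (hpS i)) t
      have hr2 : (ph i / pS i) ^ t < (ph j / pS j) ^ t :=
        Real.rpow_lt_rpow (le_of_lt (div_pos (hph i) (hpS i))) h1 htpos
      exact gap_aux _ _ _ _ (hnu i) (hnu j) hr1 hr2 hns
    fin_cases k
    · have := key 0 1 hnus hmsg (by linarith) (by linarith)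
      simpa [Fin.sum_univ_two] using this
    · have := key 1 0 (by linarith) hmsg (by linarith) (by linarith)
      have e : nu 1 * (ph 1 / pS 1) ^ t + nu 0 * (ph 0 / pS 0) ^ t =
          nu 0 * (ph 0 / pS 0) ^ t + nu 1 * (ph 1 / pS 1) ^ t := by ring
      rw [e] at this
      simpa [Fin.sum_univ_two] using this
end
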